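/- In the modified AKV model, the subspace V := {e_0, e_1, ψ, ψ', Zψ, Z*ψ'}^⊥ satisfies: Zu ∈ V and Z*u ∈ V for every u ∈ V; the orthogonal projection p_V onto V commutes with P_3 and with |Z|; and consequently p_V commutes with the effective Hamiltonian H_eff. -/

import Mathlib

noncomputable section

open ContinuousLinearMap Finset
open scoped InnerProductSpace

/-- The Hilbert space ℂ^(N+M+1) of the modified AKV model. -/
abbrev AKVSpace (N M : ℕ) := EuclideanSpace ℂ (Fin (N + M + 1))

namespace AKV

variable (N M : ℕ)

/-- standard basis vector -/
def ket (i : Fin (N + M + 1)) : AKVSpace N M := EuclideanSpace.single i 1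

/-- rank-one operator |u⟩⟨v| : x ↦ ⟪v, x⟫ • u -/
def ketbra (u v : AKVSpace N M) : AKVSpace N M →L[ℂ] AKVSpace N M :=
  (innerSL ℂ v).smulRight u

/-- indices 2,…,N of the second level -/
def idx2 : Finset (Fin (N + M + 1)) := univ.filter fun i => 2 ≤ (i : ℕ) ∧ (i : ℕ) ≤ N
/-- indices N+1,…,N+M of the third level -/
def idx3 : Finset (Fin (N + M + 1)) := univ.filter fun i => N + 1 ≤ (i : ℕ)

/-- orthogonal projection onto span{e_0} -/
def P0 : AKVSpace N M →L[ℂ] AKVSpace N M := ketbra N M (ket N M 0) (ket N M 0)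
/-- orthogonal projection onto span{e_1} -/
def P1 : AKVSpace N M →L[ℂ] AKVSpace N M := ketbra N M (ket N M 1) (ket N M 1)
/-- orthogonal projection onto span{e_2,…,e_N} -/
def P2 : AKVSpace N M →L[ℂ] AKVSpace N M := ∑ i ∈ idx2 N M, ketbra N M (ket N M i) (ket N M i)
/-- orthogonal projection onto span{e_{N+1},…,e_{N+M}} -/
def P3 : AKVSpace N M →L[ℂ] AKVSpace N M := ∑ i ∈ idx3 N M, ketbra N M (ket N M i) (ket N M i)

/-- ψ = e_2 + ⋯ + e_N -/
def psi : AKVSpace N M := ∑ i ∈ idx2 N M, ket N M i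
/-- ψ' = e_{N+1} + ⋯ + e_{N+M} -/
def psi' : AKVSpace N M := ∑ i ∈ idx3 N M, ket N M i

/-- |Z| = Z⋆Z -/
def absZ (Z : AKVSpace N M →L[ℂ] AKVSpace N M) : AKVSpace N M →L[ℂ] AKVSpace N M :=
  adjoint Z * Z

/-- hypotheses on the interference operator Z of the modified AKV model -/
def IsAKVZ (hM : 1 ≤ M) (Z : AKVSpace N M →L[ℂ] AKVSpace N M) : Prop :=
  Z = P3 N M * Z * P2 N M ∧
  Z * adjoint Z = P3 N M ∧
  Z (ket N M ⟨N - 1, by omega⟩) = ((Real.sqrt ((N : ℝ) - 1))⁻¹ : ℂ) • psi' N M ∧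
  adjoint Z (ket N M ⟨N + 1, by omega⟩) = ((Real.sqrt ((N : ℝ) - 1))⁻¹ : ℂ) • psi N M

/-- the five Kraus operators -/
def kraus (Γ1m Γ1p Γ2m Γ2p Γ3m : ℝ) (Z : AKVSpace N M →L[ℂ] AKVSpace N M) :
    Fin 5 → AKVSpace N M →L[ℂ] AKVSpace N M :=
  ![((Real.sqrt (2 * Γ1m) : ℝ) : ℂ) • ketbra N M (psi N M) (ket N M 1),
    ((Real.sqrt (2 * ((N : ℝ) - 1) * Γ2m) : ℝ) : ℂ) • Z,
    ((Real.sqrt (2 * Γ3m) : ℝ) : ℂ) • ketbra N M (ket N M 0) (psi' N M),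
    ((Real.sqrt (2 * Γ1p) : ℝ) : ℂ) • ketbra N M (ket N M 1) (psi N M),
    ((Real.sqrt (2 * ((N : ℝ) - 1) * Γ2p) : ℝ) : ℂ) • adjoint Z]

/-- the effective Hamiltonian -/
def Heff (γ1m γ1p γ2m γ2p γ3m : ℝ) (Z : AKVSpace N M →L[ℂ] AKVSpace N M) :
    AKVSpace N M →L[ℂ] AKVSpace N M :=
  (γ1p : ℂ) • ketbra N M (psi N M) (psi N M)
    - (((N : ℂ) - 1) * (γ1m : ℂ)) • ketbra N M (ket N M 1) (ket N M 1)
    + (((N : ℂ) - 1) * (γ2p : ℂ)) • P3 N M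
    - (((N : ℂ) - 1) * (γ2m : ℂ)) • absZ N M Z
    - (γ3m : ℂ) • ketbra N M (psi' N M) (psi' N M)

/-- the predual GKSL generator ℒ_* of the modified AKV model -/
def Lstar (Γ1m Γ1p Γ2m Γ2p Γ3m γ1m γ1p γ2m γ2p γ3m : ℝ)
    (Z ρ : AKVSpace N M →L[ℂ] AKVSpace N M) : AKVSpace N M →L[ℂ] AKVSpace N M :=
  -Complex.I • (Heff N M γ1m γ1p γ2m γ2p γ3m Z * ρ - ρ * Heff N M γ1m γ1p γ2m γ2p γ3m Z)
    + ∑ k : Fin 5,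
        (kraus N M Γ1m Γ1p Γ2m Γ2p Γ3m Z k * ρ * adjoint (kraus N M Γ1m Γ1p Γ2m Γ2p Γ3m Z k)
          - (1 / 2 : ℂ) • (adjoint (kraus N M Γ1m Γ1p Γ2m Γ2p Γ3m Z k) *
                kraus N M Γ1m Γ1p Γ2m Γ2p Γ3m Z k * ρ
              + ρ * (adjoint (kraus N M Γ1m Γ1p Γ2m Γ2p Γ3m Z k) *
                kraus N M Γ1m Γ1p Γ2m Γ2p Γ3m Z k)))

/-- a state: positive semidefinite with trace one -/
def IsState (ρ : AKVSpace N M →L[ℂ] AKVSpace N M) : Prop :=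
  ρ.IsPositive ∧ LinearMap.trace ℂ (AKVSpace N M) ↑ρ = 1

/-- the interaction-free subspace W_D -/
def WD (Z : AKVSpace N M →L[ℂ] AKVSpace N M) : Submodule ℂ (AKVSpace N M) :=
  (Submodule.span ℂ {ket N M 1, psi N M, psi' N M})ᗮ ⊓
    LinearMap.ker (Z : AKVSpace N M →ₗ[ℂ] AKVSpace N M) ⊓ LinearMap.ker (adjoint Z : AKVSpace N M →ₗ[ℂ] AKVSpace N M)

/-- the subspace V = {e_0, e_1, ψ, ψ', Zψ, Z⋆ψ'}^⊥ -/
def Vsub (Z : AKVSpace N M →L[ℂ] AKVSpace N M) : Submodule ℂ (AKVSpace N M) :=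
  (Submodule.span ℂ
    {ket N M 0, ket N M 1, psi N M, psi' N M, Z (psi N M), adjoint Z (psi' N M)})ᗮ

/-- Im|Z| ∩ {ψ, Z⋆ψ'}^⊥ -/
def subA (Z : AKVSpace N M →L[ℂ] AKVSpace N M) : Submodule ℂ (AKVSpace N M) :=
  LinearMap.range (absZ N M Z : AKVSpace N M →ₗ[ℂ] AKVSpace N M) ⊓ (Submodule.span ℂ {psi N M, adjoint Z (psi' N M)})ᗮ

/-- ran P₃ ∩ {ψ', Zψ}^⊥ -/
def subB (Z : AKVSpace N M →L[ℂ] AKVSpace N M) : Submodule ℂ (AKVSpace N M) :=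
  LinearMap.range (P3 N M : AKVSpace N M →ₗ[ℂ] AKVSpace N M) ⊓ (Submodule.span ℂ {psi' N M, Z (psi N M)})ᗮ

/-- the orthogonal projection onto a subspace, as an operator on the whole space -/
def projOp (U : Submodule ℂ (AKVSpace N M)) : AKVSpace N M →L[ℂ] AKVSpace N M :=
  U.subtypeL ∘L U.orthogonalProjectionOnto

end AKV

/-! The space `V` is the orthogonal complement of `U = span {e₀, e₁, ψ, ψ', Zψ, Z⋆ψ'}`.
Since `Z = P₃ Z P₂` and `P₂ P₃ = 0`, both `Z` and `Z⋆` kill `e₀` and `e₁` and square to zero,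
`Z ψ' = 0` and `Z⋆ ψ = 0`; moreover `Z Z⋆ ψ' = P₃ ψ' = ψ'`, and `Z⋆ Z ψ = ψ` because `ψ` is a
nonzero multiple of `Z⋆ e_{N+1}` and `Z Z⋆ e_{N+1} = e_{N+1}`. So `U` is invariant under `Z` and
`Z⋆`, hence so is `V = Uᗮ`, and `U` is invariant under the self-adjoint operators `P₃ = Z Z⋆`,
`|Z| = Z⋆ Z` and `|u⟩⟨u|` (`u ∈ U`), of which `H_eff` is a linear combination. A self-adjoint
operator leaving `U` invariant also leaves `Uᗮ` invariant, so it commutes with the projection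
onto `V`. -/

open InnerProductSpace

section InvariantSubspace

variable {𝕜 E : Type*} [RCLike 𝕜] [NormedAddCommGroup E] [InnerProductSpace 𝕜 E]

theorem Submodule.span_mem_invtSubmodule {R M : Type*} [Semiring R] [AddCommMonoid M]
    [Module R M] {f : Module.End R M} {s : Set M} (h : ∀ x ∈ s, f x ∈ Submodule.span R s) :
    Submodule.span R s ∈ f.invtSubmodule :=
  Submodule.span_le.2 h

theorem Submodule.mul_mem_invtSubmodule {U : Submodule 𝕜 E} {T S : E →L[𝕜] E}
    (hT : U ∈ Module.End.invtSubmodule T.toLinearMap)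
    (hS : U ∈ Module.End.invtSubmodule S.toLinearMap) :
    U ∈ Module.End.invtSubmodule (T * S).toLinearMap :=
  fun _ hx => hT (hS hx)

theorem Submodule.rankOne_mem_invtSubmodule {U : Submodule 𝕜 E} {u : E} (hu : u ∈ U) (v : E) :
    U ∈ Module.End.invtSubmodule (rankOne 𝕜 u v).toLinearMap :=
  fun _ _ => U.smul_mem _ hu

variable [CompleteSpace E]

theorem IsSelfAdjoint.commute_starProjection_orthogonal {T : E →L[𝕜] E} (hT : IsSelfAdjoint T)
    {U : Submodule 𝕜 E} (hU : U ∈ Module.End.invtSubmodule T.toLinearMap) :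
    Commute Uᗮ.starProjection T := by
  have hUadj : U ∈ Module.End.invtSubmodule (adjoint T).toLinearMap := by rwa [hT.adjoint_eq]
  refine Uᗮ.isIdempotentElem_starProjection.commute_iff.2 ⟨?_, ?_⟩
  · rw [Submodule.range_starProjection]
    exact orthogonal_mem_invtSubmodule hUadj
  · rw [Submodule.ker_starProjection]
    exact orthogonal_mem_invtSubmodule (orthogonal_mem_invtSubmodule (by rwa [adjoint_adjoint]))

theorem isSelfAdjoint_rankOne_self (u : E) : IsSelfAdjoint (rankOne 𝕜 u u) := by
  rw [isSelfAdjoint_iff', adjoint_rankOne]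

theorem isSelfAdjoint_sum_rankOne_self {ι : Type*} (s : Finset ι) (v : ι → E) :
    IsSelfAdjoint (∑ i ∈ s, rankOne 𝕜 (v i) (v i)) :=
  isSelfAdjoint_sum s fun i _ => isSelfAdjoint_rankOne_self (v i)

end InvariantSubspace

section OrthonormalFamily

variable {ι 𝕜 E : Type*} [RCLike 𝕜] [NormedAddCommGroup E] [InnerProductSpace 𝕜 E] {e : ι → E}

theorem Orthonormal.sum_rankOne_mul_of_disjoint (he : Orthonormal 𝕜 e) {s t : Finset ι}
    (h : Disjoint s t) :
    (∑ i ∈ s, rankOne 𝕜 (e i) (e i)) * (∑ j ∈ t, rankOne 𝕜 (e j) (e j)) = 0 := by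
  rw [sum_mul_sum]
  refine sum_eq_zero fun i hi => sum_eq_zero fun j hj => ?_
  rw [ContinuousLinearMap.mul_def, rankOne_comp_rankOne, he.2 (disjoint_iff_ne.1 h i hi j hj),
    zero_smul]

variable [DecidableEq ι]

theorem Orthonormal.sum_rankOne_apply (he : Orthonormal 𝕜 e) (s : Finset ι) (j : ι) :
    (∑ i ∈ s, rankOne 𝕜 (e i) (e i)) (e j) = if j ∈ s then e j else 0 := by
  simp [orthonormal_iff_ite.1 he]

theorem Orthonormal.sum_rankOne_apply_sum_of_disjoint (he : Orthonormal 𝕜 e) {s t : Finset ι}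
    (h : Disjoint s t) : (∑ i ∈ s, rankOne 𝕜 (e i) (e i)) (∑ j ∈ t, e j) = 0 := by
  rw [map_sum]
  exact sum_eq_zero fun j hj => by rw [he.sum_rankOne_apply, if_neg (disjoint_right.1 h hj)]

theorem Orthonormal.sum_rankOne_apply_sum_self (he : Orthonormal 𝕜 e) (s : Finset ι) :
    (∑ i ∈ s, rankOne 𝕜 (e i) (e i)) (∑ j ∈ s, e j) = ∑ j ∈ s, e j := by
  rw [map_sum]
  exact sum_congr rfl fun j hj => by rw [he.sum_rankOne_apply, if_pos hj]

end OrthonormalFamily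

namespace AKV

variable {N M : ℕ}

lemma orthonormal_ket : Orthonormal ℂ (ket N M) := EuclideanSpace.orthonormal_single

lemma ketbra_eq_rankOne (u v : AKVSpace N M) : ketbra N M u v = rankOne ℂ u v := rfl

lemma P2_eq_sum_rankOne : P2 N M = ∑ i ∈ idx2 N M, rankOne ℂ (ket N M i) (ket N M i) := rfl

lemma P3_eq_sum_rankOne : P3 N M = ∑ i ∈ idx3 N M, rankOne ℂ (ket N M i) (ket N M i) := rfl

lemma isSelfAdjoint_P2 : IsSelfAdjoint (P2 N M) := isSelfAdjoint_sum_rankOne_self _ _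

lemma isSelfAdjoint_P3 : IsSelfAdjoint (P3 N M) := isSelfAdjoint_sum_rankOne_self _ _

lemma disjoint_idx2_idx3 : Disjoint (idx2 N M) (idx3 N M) := by
  simp only [idx2, idx3, disjoint_filter]
  omega

lemma P2_mul_P3 : P2 N M * P3 N M = 0 :=
  orthonormal_ket.sum_rankOne_mul_of_disjoint disjoint_idx2_idx3

lemma P3_mul_P2 : P3 N M * P2 N M = 0 :=
  orthonormal_ket.sum_rankOne_mul_of_disjoint disjoint_idx2_idx3.symm

lemma P2_ket_of_lt {j : Fin (N + M + 1)} (hj : (j : ℕ) < 2) : P2 N M (ket N M j) = 0 := by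
  rw [P2_eq_sum_rankOne, orthonormal_ket.sum_rankOne_apply, if_neg]
  simp only [idx2, mem_filter, mem_univ, true_and]
  omega

lemma P3_ket_of_le {j : Fin (N + M + 1)} (hj : (j : ℕ) ≤ N) : P3 N M (ket N M j) = 0 := by
  rw [P3_eq_sum_rankOne, orthonormal_ket.sum_rankOne_apply, if_neg]
  simp only [idx3, mem_filter, mem_univ, true_and]
  omega

lemma P3_ket_of_lt {j : Fin (N + M + 1)} (hj : N < (j : ℕ)) :
    P3 N M (ket N M j) = ket N M j := by
  rw [P3_eq_sum_rankOne, orthonormal_ket.sum_rankOne_apply, if_pos]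
  simpa [idx3] using hj

lemma P2_psi' : P2 N M (psi' N M) = 0 :=
  orthonormal_ket.sum_rankOne_apply_sum_of_disjoint disjoint_idx2_idx3

lemma P3_psi : P3 N M (psi N M) = 0 :=
  orthonormal_ket.sum_rankOne_apply_sum_of_disjoint disjoint_idx2_idx3.symm

lemma P3_psi' : P3 N M (psi' N M) = psi' N M :=
  orthonormal_ket.sum_rankOne_apply_sum_self _

lemma val_one_le_one : ((1 : Fin (N + M + 1)) : ℕ) ≤ 1 := by
  simpa [Fin.val_one'] using Nat.mod_le 1 (N + M + 1)

section Interference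

variable {Z : AKVSpace N M →L[ℂ] AKVSpace N M}

lemma apply_eq_zero_of_P2_apply_eq_zero (hZ : Z = P3 N M * Z * P2 N M) {x : AKVSpace N M}
    (hx : P2 N M x = 0) : Z x = 0 := by
  rw [hZ]
  simp [hx]

lemma P2_apply_eq_zero (hZ : Z = P3 N M * Z * P2 N M) (x : AKVSpace N M) :
    P2 N M (Z x) = 0 := by
  rw [hZ, ← mul_apply_eq_comp]
  simp [← mul_assoc, P2_mul_P3]

lemma apply_apply_eq_zero (hZ : Z = P3 N M * Z * P2 N M) (x : AKVSpace N M) : Z (Z x) = 0 :=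
  apply_eq_zero_of_P2_apply_eq_zero hZ (P2_apply_eq_zero hZ x)

lemma adjoint_eq_P2_mul_mul_P3 (hZ : Z = P3 N M * Z * P2 N M) :
    adjoint Z = P2 N M * adjoint Z * P3 N M := by
  conv_lhs => rw [hZ]
  rw [← star_eq_adjoint, star_mul, star_mul, isSelfAdjoint_P2.star_eq, isSelfAdjoint_P3.star_eq,
    star_eq_adjoint, mul_assoc]

lemma adjoint_apply_eq_zero_of_P3_apply_eq_zero (hZ : Z = P3 N M * Z * P2 N M)
    {x : AKVSpace N M} (hx : P3 N M x = 0) : adjoint Z x = 0 := by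
  rw [adjoint_eq_P2_mul_mul_P3 hZ]
  simp [hx]

lemma P3_adjoint_apply_eq_zero (hZ : Z = P3 N M * Z * P2 N M) (x : AKVSpace N M) :
    P3 N M (adjoint Z x) = 0 := by
  rw [adjoint_eq_P2_mul_mul_P3 hZ, ← mul_apply_eq_comp]
  simp [← mul_assoc, P3_mul_P2]

lemma adjoint_apply_adjoint_apply_eq_zero (hZ : Z = P3 N M * Z * P2 N M) (x : AKVSpace N M) :
    adjoint Z (adjoint Z x) = 0 :=
  adjoint_apply_eq_zero_of_P3_apply_eq_zero hZ (P3_adjoint_apply_eq_zero hZ x)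

lemma adjoint_apply_apply_psi (hM : 1 ≤ M) (hN : 1 < N) (hZ : IsAKVZ N M hM Z) :
    adjoint Z (Z (psi N M)) = psi N M := by
  obtain ⟨-, hZZ, -, hψ⟩ := hZ
  have hc : ((Real.sqrt ((N : ℝ) - 1))⁻¹ : ℂ) ≠ 0 := by
    have : (1 : ℝ) < N := by exact_mod_cast hN
    exact inv_ne_zero (Complex.ofReal_ne_zero.2 (Real.sqrt_ne_zero'.2 (by linarith)))
  have hZadj (x : AKVSpace N M) : Z (adjoint Z x) = P3 N M x := congr($hZZ x)
  rw [← inv_smul_smul₀ hc (psi N M), ← hψ, map_smul, map_smul, hZadj, P3_ket_of_lt (by simp)]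

end Interference

def Vperp (Z : AKVSpace N M →L[ℂ] AKVSpace N M) : Submodule ℂ (AKVSpace N M) :=
  Submodule.span ℂ {ket N M 0, ket N M 1, psi N M, psi' N M, Z (psi N M), adjoint Z (psi' N M)}

lemma Vsub_eq_orthogonal_Vperp (Z : AKVSpace N M →L[ℂ] AKVSpace N M) :
    Vsub N M Z = (Vperp Z)ᗮ := rfl

lemma projOp_eq_starProjection (U : Submodule ℂ (AKVSpace N M)) :
    projOp N M U = U.starProjection := rfl

section Invariance

variable {Z : AKVSpace N M →L[ℂ] AKVSpace N M}

lemma Vperp_mem_invtSubmodule (hZ : Z = P3 N M * Z * P2 N M) (hZZ : Z * adjoint Z = P3 N M) :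
    Vperp Z ∈ Module.End.invtSubmodule Z.toLinearMap := by
  apply Submodule.span_mem_invtSubmodule
  simp only [Set.mem_insert_iff, Set.mem_singleton_iff, forall_eq_or_imp, forall_eq, coe_coe]
  refine ⟨?_, ?_, Submodule.subset_span (by simp), ?_, ?_, ?_⟩
  · rw [apply_eq_zero_of_P2_apply_eq_zero hZ (P2_ket_of_lt (by simp))]
    exact zero_mem _
  · rw [apply_eq_zero_of_P2_apply_eq_zero hZ (P2_ket_of_lt (val_one_le_one.trans_lt one_lt_two))]
    exact zero_mem _
  · rw [apply_eq_zero_of_P2_apply_eq_zero hZ P2_psi']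
    exact zero_mem _
  · rw [apply_apply_eq_zero hZ]
    exact zero_mem _
  · rw [← mul_apply_eq_comp, hZZ, P3_psi']
    exact Submodule.subset_span (by simp)

lemma Vperp_mem_invtSubmodule_adjoint (hM : 1 ≤ M) (hN : 1 < N) (hZ : IsAKVZ N M hM Z) :
    Vperp Z ∈ Module.End.invtSubmodule (adjoint Z).toLinearMap := by
  apply Submodule.span_mem_invtSubmodule
  simp only [Set.mem_insert_iff, Set.mem_singleton_iff, forall_eq_or_imp, forall_eq, coe_coe]
  refine ⟨?_, ?_, ?_, Submodule.subset_span (by simp), ?_, ?_⟩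
  · rw [adjoint_apply_eq_zero_of_P3_apply_eq_zero hZ.1 (P3_ket_of_le (by simp))]
    exact zero_mem _
  · rw [adjoint_apply_eq_zero_of_P3_apply_eq_zero hZ.1 (P3_ket_of_le (val_one_le_one.trans hN.le))]
    exact zero_mem _
  · rw [adjoint_apply_eq_zero_of_P3_apply_eq_zero hZ.1 P3_psi]
    exact zero_mem _
  · rw [adjoint_apply_apply_psi hM hN hZ]
    exact Submodule.subset_span (by simp)
  · rw [adjoint_apply_adjoint_apply_eq_zero hZ.1]
    exact zero_mem _

end Invariance

theorem projV_subharmonic_general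
    (N M : ℕ) (hN : 3 ≤ N) (hM1 : 1 ≤ M)
    (γ1m γ1p γ2m γ2p γ3m : ℝ)
    (Z : AKVSpace N M →L[ℂ] AKVSpace N M) (hZ : IsAKVZ N M hM1 Z) :
    (∀ u ∈ Vsub N M Z, Z u ∈ Vsub N M Z ∧ ContinuousLinearMap.adjoint Z u ∈ Vsub N M Z) ∧
    projOp N M (Vsub N M Z) * P3 N M = P3 N M * projOp N M (Vsub N M Z) ∧
    projOp N M (Vsub N M Z) * absZ N M Z = absZ N M Z * projOp N M (Vsub N M Z) ∧
    projOp N M (Vsub N M Z) * Heff N M γ1m γ1p γ2m γ2p γ3m Z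
      = Heff N M γ1m γ1p γ2m γ2p γ3m Z * projOp N M (Vsub N M Z) := by
  rw [Vsub_eq_orthogonal_Vperp, projOp_eq_starProjection]
  have hZ_inv := Vperp_mem_invtSubmodule hZ.1 hZ.2.1
  have hZadj_inv := Vperp_mem_invtSubmodule_adjoint hM1 (by omega) hZ
  have hP3 : Commute (Vperp Z)ᗮ.starProjection (P3 N M) := hZ.2.1 ▸
    (IsSelfAdjoint.mul_star_self Z).commute_starProjection_orthogonal
      (Submodule.mul_mem_invtSubmodule hZ_inv hZadj_inv)
  have habsZ : Commute (Vperp Z)ᗮ.starProjection (absZ N M Z) :=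
    (IsSelfAdjoint.star_mul_self Z).commute_starProjection_orthogonal
      (Submodule.mul_mem_invtSubmodule hZadj_inv hZ_inv)
  have hketbra {u : AKVSpace N M} (hu : u ∈ Vperp Z) :
      Commute (Vperp Z)ᗮ.starProjection (ketbra N M u u) :=
    ketbra_eq_rankOne u u ▸ (isSelfAdjoint_rankOne_self u).commute_starProjection_orthogonal
      (Submodule.rankOne_mem_invtSubmodule hu u)
  have hV_inv : (Vperp Z)ᗮ ∈ Module.End.invtSubmodule Z.toLinearMap :=
    orthogonal_mem_invtSubmodule hZadj_inv
  have hV_inv_adj : (Vperp Z)ᗮ ∈ Module.End.invtSubmodule (adjoint Z).toLinearMap :=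
    orthogonal_mem_invtSubmodule (by rwa [adjoint_adjoint])
  have hψ : psi N M ∈ Vperp Z := Submodule.subset_span (by simp)
  have he₁ : ket N M 1 ∈ Vperp Z := Submodule.subset_span (by simp)
  have hψ' : psi' N M ∈ Vperp Z := Submodule.subset_span (by simp)
  refine ⟨fun u hu => ⟨hV_inv hu, hV_inv_adj hu⟩, hP3, habsZ, ?_⟩
  exact (((((hketbra hψ).smul_right _).sub_right ((hketbra he₁).smul_right _)).add_right
    (hP3.smul_right _)).sub_right (habsZ.smul_right _)).sub_right ((hketbra hψ').smul_right _)

/-- In the modified AKV model, the subspace `V = {e₀, e₁, ψ, ψ', Zψ, Z⋆ψ'}^⊥` is invariant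
under `Z` and `Z⋆`, and the orthogonal projection `p_V` onto `V` commutes with `P₃`, with
`|Z|`, and with the effective Hamiltonian `H_eff`. -/
theorem projV_subharmonic
    (N M : ℕ) (hN : 3 ≤ N) (hM1 : 1 ≤ M) (hM2 : M ≤ N - 1)
    (γ1m γ1p γ2m γ2p γ3m : ℝ)
    (hγ : 0 < γ1m ∧ 0 < γ1p ∧ 0 < γ2m ∧ 0 < γ2p ∧ 0 < γ3m)
    (Z : AKVSpace N M →L[ℂ] AKVSpace N M) (hZ : IsAKVZ N M hM1 Z) :
    (∀ u ∈ Vsub N M Z, Z u ∈ Vsub N M Z ∧ ContinuousLinearMap.adjoint Z u ∈ Vsub N M Z) ∧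
    projOp N M (Vsub N M Z) * P3 N M = P3 N M * projOp N M (Vsub N M Z) ∧
    projOp N M (Vsub N M Z) * absZ N M Z = absZ N M Z * projOp N M (Vsub N M Z) ∧
    projOp N M (Vsub N M Z) * Heff N M γ1m γ1p γ2m γ2p γ3m Z
      = Heff N M γ1m γ1p γ2m γ2p γ3m Z * projOp N M (Vsub N M Z) :=
  projV_subharmonic_general N M hN hM1 γ1m γ1p γ2m γ2p γ3m Z hZ

end AKV
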